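/- For every integer N ≥ 1, the identity P_{3N+2} · (1 − y q^{3N+2}) = P_{3N+1} − P_{3N−1} · y q^{3N+2} holds in the formal power series ring ℤ[[x, y, q]]. -/

import Mathlib

/-- The `i`-th largest part (0-indexed) of the weakly decreasing list of parts of a
partition of `n` (entries beyond the number of parts are `0`, which realizes the
padding by zeros). -/
def nthPart {n : ℕ} (P : n.Partition) (i : ℕ) : ℕ :=
  ((P.parts.sort (· ≤ ·)).reverse).getD i 0

/-- The `j`-th component (`1 ≤ j ≤ m - 1`) of the alternating sum type modulo `m` of a
partition of `n`: `Σ_j = ∑_i (λ_{(i-1)m+j} - λ_{(i-1)m+j+1})` (1-indexed parts, padded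
by zeros; summing over `i < n + 1` covers every nonzero term). -/
def altSumType (m : ℕ) {n : ℕ} (P : n.Partition) (j : ℕ) : ℕ :=
  ∑ i ∈ Finset.range (n + 1), (nthPart P (i * m + (j - 1)) - nthPart P (i * m + j))

/-- `aN N s1 s2 n` : the number of partitions of `n` with exactly `N` (positive) parts,
every part occurring at most twice, and alternating sum type modulo `3` equal to
`(s1, s2)`. -/
noncomputable def aN (N s1 s2 n : ℕ) : ℕ :=
  Nat.card {P : n.Partition // P.parts.card = N ∧ (∀ p, P.parts.count p ≤ 2) ∧
    altSumType 3 P 1 = s1 ∧ altSumType 3 P 2 = s2}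

/-- The formal power series `A_N ∈ ℤ[[x, y, q]]` (variables `x = X 0`, `y = X 1`,
`q = X 2`): `A_0 = 1` and, for `N ≥ 1`,
`A_N = ∑_{Σ₁, Σ₂ ≥ 0, n ≥ 1} a_N(Σ₁, Σ₂; n) x^{Σ₁} y^{Σ₂} q^n`. -/
noncomputable def Aser (N : ℕ) : MvPowerSeries (Fin 3) ℤ :=
  if N = 0 then 1
  else fun e => if 1 ≤ e 2 then (aN N (e 0) (e 1) (e 2) : ℤ) else 0

/-- The variable `x`. -/
noncomputable def Xv : MvPowerSeries (Fin 3) ℤ := MvPowerSeries.X 0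

/-- The variable `y`. -/
noncomputable def Yv : MvPowerSeries (Fin 3) ℤ := MvPowerSeries.X 1

/-- The variable `q`. -/
noncomputable def Qv : MvPowerSeries (Fin 3) ℤ := MvPowerSeries.X 2

/-- The formal power series `P_N = ∑_{i=0}^{N} A_i ∈ ℤ[[x, y, q]]`. -/
noncomputable def Pser (N : ℕ) : MvPowerSeries (Fin 3) ℤ :=
  ∑ i ∈ Finset.range (N + 1), Aser i

/-!
Adding `1` to each of `k` parts (after appending zeros up to `k` parts), i.e. adding a first
column of height `k` to the Young diagram, is a bijection from the partitions of `n` with at most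
`k` parts onto the partitions of `n + k` with exactly `k` parts. It preserves every difference of
consecutive entries except the one between the `k`-th and `(k+1)`-st, which grows by one; for
`k = 3N + 2` this keeps `Σ₁` and raises `Σ₂` by one. The part `p + 1` occurs as often as `p` did,
and the part `1` occurs `k - ℓ` times, `ℓ` the old number of parts; so "every part at most twice"
survives exactly when `3N ≤ ℓ`. Hence `A_{3N+2} = (A_{3N} + A_{3N+1} + A_{3N+2}) y q^{3N+2}`, and
the identity follows by telescoping `P`.
-/

open Finset

theorem Nat.card_eq_sum_card_fiberwise {α β : Type*} [Finite α] (f : α → β) (t : Finset β)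
    (p : α → Prop) : Nat.card {a // f a ∈ t ∧ p a} = ∑ b ∈ t, Nat.card {a // f a = b ∧ p a} := by
  classical
  have := Fintype.ofFinite α
  simp only [Nat.card_eq_fintype_card, Fintype.card_subtype]
  rw [Finset.card_eq_sum_card_fiberwise (f := f) (t := t) fun a ha => (mem_filter.mp ha).2.1]
  refine sum_congr rfl fun b hb => congrArg card ?_
  ext a
  simp only [mem_filter, mem_univ, true_and]
  constructor
  · rintro ⟨⟨-, h⟩, rfl⟩
    exact ⟨rfl, h⟩
  · rintro ⟨rfl, h⟩
    exact ⟨⟨hb, h⟩, rfl⟩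

namespace Nat.Partition

variable {n : ℕ}

theorem card_parts_le (P : n.Partition) : P.parts.card ≤ n := by
  simpa [P.parts_sum] using
    Multiset.card_nsmul_le_sum (s := P.parts) (a := 1) fun _ hx => P.parts_pos hx

def sortedParts (P : n.Partition) : List ℕ := (P.parts.sort (· ≤ ·)).reverse

theorem nthPart_eq_getD (P : n.Partition) (i : ℕ) : nthPart P i = P.sortedParts.getD i 0 := rfl

theorem coe_sortedParts (P : n.Partition) : (P.sortedParts : Multiset ℕ) = P.parts := by
  rw [sortedParts, ← Multiset.coe_reverse, List.reverse_reverse, Multiset.sort_eq]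

theorem length_sortedParts (P : n.Partition) : P.sortedParts.length = P.parts.card := by
  rw [← Multiset.coe_card, coe_sortedParts]

theorem sortedParts_pairwise (P : n.Partition) : P.sortedParts.Pairwise (· ≥ ·) :=
  List.pairwise_reverse.mpr (Multiset.pairwise_sort _ _)

theorem sortedParts_eq_of_pairwise (P : n.Partition) {l : List ℕ} (hl : l.Pairwise (· ≥ ·))
    (hP : (l : Multiset ℕ) = P.parts) : P.sortedParts = l := by
  refine List.Perm.eq_of_pairwise (fun _ _ _ _ h₁ h₂ => le_antisymm h₂ h₁) ?_ hl ?_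
  · exact P.sortedParts_pairwise
  · rw [← Multiset.coe_eq_coe, coe_sortedParts, hP]

theorem nthPart_eq_zero (P : n.Partition) {i : ℕ} (hi : P.parts.card ≤ i) : nthPart P i = 0 := by
  rw [← length_sortedParts] at hi
  rw [nthPart_eq_getD, List.getD_eq_default _ _ hi]

theorem count_zero_parts (P : n.Partition) : P.parts.count 0 = 0 :=
  Multiset.count_eq_zero.mpr fun h => (P.parts_pos h).ne' rfl

theorem map_succ_map_pred_filter_ne_one (P : n.Partition) :
    ((P.parts.filter (· ≠ 1)).map (· - 1)).map (· + 1) = P.parts.filter (· ≠ 1) := by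
  rw [Multiset.map_map]
  refine (Multiset.map_congr rfl fun x hx => ?_).trans (Multiset.map_id' _)
  have := P.parts_pos (Multiset.mem_of_mem_filter hx)
  simp only [Function.comp_apply]
  omega

theorem filter_ne_one_add_replicate (P : n.Partition) :
    P.parts.filter (· ≠ 1) + Multiset.replicate (P.parts.count 1) 1 = P.parts := by
  rw [← Multiset.filter_eq']
  convert Multiset.filter_add_not (· ≠ 1) P.parts using 3
  simp

def addColumnEquiv (n k : ℕ) :
    {Q : n.Partition // Q.parts.card ≤ k} ≃ {P : (n + k).Partition // P.parts.card = k} where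
  toFun Q :=
    ⟨{ parts := Q.1.parts.map (· + 1) + Multiset.replicate (k - Q.1.parts.card) 1
       parts_pos := by
         simp only [Multiset.mem_add, Multiset.mem_map, Multiset.mem_replicate]
         rintro _ (⟨a, -, rfl⟩ | ⟨-, rfl⟩) <;> omega
       parts_sum := by
         simp only [Multiset.sum_add, Multiset.sum_map_add, Multiset.map_id', Q.1.parts_sum,
           Multiset.map_const', Multiset.sum_replicate, smul_eq_mul, mul_one]
         omega },
     by
       simp only [Multiset.card_add, Multiset.card_map, Multiset.card_replicate]
       omega⟩
  invFun P :=
    ⟨{ parts := (P.1.parts.filter (· ≠ 1)).map (· - 1)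
       parts_pos := by
         simp only [Multiset.mem_map, Multiset.mem_filter]
         rintro _ ⟨a, ⟨ha, ha1⟩, rfl⟩
         have := P.1.parts_pos ha
         omega
       parts_sum := by
         have hsum := congrArg Multiset.sum (filter_ne_one_add_replicate P.1)
         have hcard := congrArg Multiset.card (filter_ne_one_add_replicate P.1)
         have hsucc := congrArg Multiset.sum (map_succ_map_pred_filter_ne_one P.1)
         simp only [Multiset.sum_add, Multiset.sum_replicate, Multiset.card_add,
           Multiset.card_replicate, Multiset.sum_map_add, Multiset.map_const', Multiset.card_map,
           Multiset.map_id', P.1.parts_sum, P.2, smul_eq_mul, mul_one] at hsum hcard hsucc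
         omega },
     by simpa [← P.2] using Multiset.card_le_card (Multiset.filter_le _ _)⟩
  left_inv Q := by
    refine Subtype.ext (Nat.Partition.ext ?_)
    dsimp only
    rw [Multiset.filter_add,
      Multiset.filter_eq_self.mpr (by simpa using fun _ h => (Q.1.parts_pos h).ne'),
      (Multiset.filter_eq_nil (s := Multiset.replicate _ 1)).mpr
        fun _ h => by simp [Multiset.eq_of_mem_replicate h],
      add_zero, Multiset.map_map]
    exact (Multiset.map_congr rfl fun x _ => by simp).trans (Multiset.map_id' _)
  right_inv P := by
    refine Subtype.ext (Nat.Partition.ext ?_)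
    have hcard := congrArg Multiset.card (filter_ne_one_add_replicate P.1)
    rw [Multiset.card_add, Multiset.card_replicate, P.2] at hcard
    dsimp only
    rw [map_succ_map_pred_filter_ne_one, Multiset.card_map,
      show k - (P.1.parts.filter (· ≠ 1)).card = P.1.parts.count 1 by omega]
    exact filter_ne_one_add_replicate P.1

theorem altSumType_eq_sum_range (P : n.Partition) {m : ℕ} (hm : 0 < m) (j : ℕ) {L : ℕ}
    (hL : n + 1 ≤ L) :
    altSumType m P j = ∑ i ∈ range L, (nthPart P (i * m + (j - 1)) - nthPart P (i * m + j)) := by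
  refine sum_subset (range_subset_range.mpr hL) fun i _ hi => ?_
  have : P.parts.card ≤ i * m := by
    have := P.card_parts_le
    simp only [mem_range, not_lt] at hi
    nlinarith
  rw [nthPart_eq_zero _ (by omega), nthPart_eq_zero _ (by omega), Nat.sub_zero]

section addColumn

variable {k : ℕ} (Q : {Q : n.Partition // Q.parts.card ≤ k})

theorem parts_addColumnEquiv : (addColumnEquiv n k Q).1.parts =
    Q.1.parts.map (· + 1) + Multiset.replicate (k - Q.1.parts.card) 1 := rfl

theorem sortedParts_addColumnEquiv : (addColumnEquiv n k Q).1.sortedParts =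
    Q.1.sortedParts.map (· + 1) ++ List.replicate (k - Q.1.parts.card) 1 := by
  apply sortedParts_eq_of_pairwise
  · refine List.pairwise_append.mpr ⟨?_, List.pairwise_replicate.mpr (Or.inr le_rfl), ?_⟩
    · exact List.pairwise_map.mpr (Q.1.sortedParts_pairwise.imp fun h => by omega)
    · simp
  · rw [← Multiset.coe_add, ← Multiset.map_coe, coe_sortedParts, Multiset.coe_replicate,
      parts_addColumnEquiv]

theorem nthPart_addColumnEquiv (i : ℕ) :
    nthPart (addColumnEquiv n k Q).1 i = if i < k then nthPart Q.1 i + 1 else 0 := by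
  have hQ := Q.2
  have hlen := length_sortedParts Q.1
  rw [nthPart_eq_getD, nthPart_eq_getD, sortedParts_addColumnEquiv]
  rcases lt_or_ge i Q.1.parts.card with hi | hi
  · rw [List.getD_append _ _ _ _ (by simpa [hlen]), if_pos (by omega),
      List.getD_eq_getElem _ _ (by simpa [hlen]), List.getD_eq_getElem _ _ (by simpa [hlen]),
      List.getElem_map]
  · rw [List.getD_append_right _ _ _ _ (by simpa [hlen]),
      List.getD_eq_default Q.1.sortedParts 0 (by omega)]
    split_ifs with hik
    · rw [List.getD_replicate _ (by rw [List.length_map, hlen]; omega)]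
    · rw [List.getD_eq_default _ _ (by rw [List.length_map, List.length_replicate, hlen]; omega)]

theorem count_succ_addColumnEquiv (p : ℕ) :
    (addColumnEquiv n k Q).1.parts.count (p + 1) =
      Q.1.parts.count p + if p = 0 then k - Q.1.parts.card else 0 := by
  rw [parts_addColumnEquiv, Multiset.count_add,
    Multiset.count_map_eq_count' _ _ (add_left_injective 1), Multiset.count_replicate]
  simp

theorem forall_count_addColumnEquiv_le_iff (b : ℕ) :
    (∀ p, (addColumnEquiv n k Q).1.parts.count p ≤ b) ↔
      (∀ p, Q.1.parts.count p ≤ b) ∧ k - Q.1.parts.card ≤ b := by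
  constructor
  · intro h
    refine ⟨fun p => ?_, ?_⟩
    · have := h (p + 1)
      rw [count_succ_addColumnEquiv] at this
      omega
    · simpa [count_succ_addColumnEquiv, count_zero_parts] using h 1
  · rintro ⟨hQ, hk⟩ (_ | p)
    · simp [count_zero_parts]
    · rw [count_succ_addColumnEquiv]
      split_ifs with hp
      · simpa [hp, count_zero_parts] using hk
      · simpa using hQ p

theorem nthPart_sub_nthPart_succ_addColumnEquiv (x : ℕ) :
    nthPart (addColumnEquiv n k Q).1 x - nthPart (addColumnEquiv n k Q).1 (x + 1) =
      nthPart Q.1 x - nthPart Q.1 (x + 1) + if x + 1 = k then 1 else 0 := by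
  have hQ := Q.2
  have h₀ : k ≤ x → nthPart Q.1 x = 0 := fun h => nthPart_eq_zero _ (by omega)
  have h₁ : k ≤ x + 1 → nthPart Q.1 (x + 1) = 0 := fun h => nthPart_eq_zero _ (by omega)
  simp only [nthPart_addColumnEquiv]
  split_ifs <;> omega

theorem altSumType_addColumnEquiv {m : ℕ} (hm : 0 < m) {j : ℕ} (hj : 1 ≤ j) :
    altSumType m (addColumnEquiv n k Q).1 j =
      altSumType m Q.1 j + #{i ∈ range (n + k + 1) | i * m + j = k} := by
  rw [altSumType, altSumType_eq_sum_range Q.1 hm j (L := n + k + 1) (by omega), card_filter,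
    ← sum_add_distrib]
  refine sum_congr rfl fun i _ => ?_
  have := nthPart_sub_nthPart_succ_addColumnEquiv Q (i * m + (j - 1))
  rwa [show i * m + (j - 1) + 1 = i * m + j by omega] at this

end addColumn

end Nat.Partition

open Nat.Partition

section ModThree

variable {N n : ℕ}

theorem card_filter_mul_three_add_one_eq (L : ℕ) : #{i ∈ range L | i * 3 + 1 = 3 * N + 2} = 0 :=
  card_eq_zero.mpr (filter_eq_empty_iff.mpr fun _ _ => by omega)

theorem card_filter_mul_three_add_two_eq {L : ℕ} (hN : N < L) :
    #{i ∈ range L | i * 3 + 2 = 3 * N + 2} = 1 :=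
  card_eq_one.mpr ⟨N, by ext i; simp only [mem_filter, mem_range, mem_singleton]; omega⟩

variable (Q : {Q : n.Partition // Q.parts.card ≤ 3 * N + 2})

theorem altSumType_one_addColumnEquiv :
    altSumType 3 (addColumnEquiv n _ Q).1 1 = altSumType 3 Q.1 1 := by
  rw [altSumType_addColumnEquiv Q three_pos le_rfl, card_filter_mul_three_add_one_eq, add_zero]

theorem altSumType_two_addColumnEquiv :
    altSumType 3 (addColumnEquiv n _ Q).1 2 = altSumType 3 Q.1 2 + 1 := by
  rw [altSumType_addColumnEquiv Q three_pos one_le_two, card_filter_mul_three_add_two_eq (by omega)]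

end ModThree

theorem aN_eq_zero_of_lt {k s₁ s₂ n : ℕ} (h : n < k) : aN k s₁ s₂ n = 0 :=
  Nat.card_eq_zero.mpr <| Or.inl ⟨fun P => (P.1.card_parts_le.trans_lt h).ne P.2.1⟩

theorem aN_three_mul_add_two_zero (N s₁ n : ℕ) : aN (3 * N + 2) s₁ 0 n = 0 := by
  refine Nat.card_eq_zero.mpr <| Or.inl ⟨fun ⟨P, hcard, _, _, h₂⟩ => ?_⟩
  obtain ⟨n, rfl⟩ := Nat.exists_eq_add_of_le' (hcard ▸ P.card_parts_le)
  have := altSumType_two_addColumnEquiv ((addColumnEquiv n _).symm ⟨P, hcard⟩)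
  simp only [Equiv.apply_symm_apply] at this
  omega

theorem aN_three_mul_add_two_succ (N s₁ s₂ n : ℕ) :
    aN (3 * N + 2) s₁ (s₂ + 1) (n + (3 * N + 2)) =
      ∑ k ∈ Ico (3 * N) (3 * N + 3), aN k s₁ s₂ n := by
  set k := 3 * N + 2
  let R (Q : n.Partition) : Prop :=
    (∀ p, Q.parts.count p ≤ 2) ∧ altSumType 3 Q 1 = s₁ ∧ altSumType 3 Q 2 = s₂
  calc aN k s₁ (s₂ + 1) (n + k)
      = Nat.card {P : {P : (n + k).Partition // P.parts.card = k} //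
          (∀ p, P.1.parts.count p ≤ 2) ∧ altSumType 3 P.1 1 = s₁ ∧ altSumType 3 P.1 2 = s₂ + 1} :=
        Nat.card_congr (Equiv.subtypeSubtypeEquivSubtypeInter _ _).symm
    _ = Nat.card {Q : {Q : n.Partition // Q.parts.card ≤ k} //
          Q.1.parts.card ∈ Ico (3 * N) (3 * N + 3) ∧ R Q.1} := by
        refine Nat.card_congr ((addColumnEquiv n k).subtypeEquiv fun Q => ?_).symm
        have hcard : k - Q.1.parts.card ≤ 2 ↔ Q.1.parts.card ∈ Ico (3 * N) (3 * N + 3) := by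
          have := Q.2
          rw [mem_Ico]
          omega
        rw [forall_count_addColumnEquiv_le_iff, altSumType_one_addColumnEquiv,
          altSumType_two_addColumnEquiv, add_left_inj, hcard]
        tauto
    _ = Nat.card {Q : n.Partition // Q.parts.card ∈ Ico (3 * N) (3 * N + 3) ∧ R Q} :=
        Nat.card_congr <| Equiv.subtypeSubtypeEquivSubtype
          (q := fun Q => Q.parts.card ∈ Ico (3 * N) (3 * N + 3) ∧ R Q)
          fun h => by rw [mem_Ico] at h; omega
    _ = ∑ k ∈ Ico (3 * N) (3 * N + 3), aN k s₁ s₂ n := Nat.card_eq_sum_card_fiberwise _ _ R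

theorem coeff_Aser {k : ℕ} (hk : k ≠ 0) (e : Fin 3 →₀ ℕ) :
    MvPowerSeries.coeff e (Aser k) = aN k (e 0) (e 1) (e 2) := by
  simp only [Aser, hk, ↓reduceIte]
  change (if 1 ≤ e 2 then (aN k (e 0) (e 1) (e 2) : ℤ) else 0) = _
  split_ifs with h
  · rfl
  · rw [Nat.lt_one_iff.mp (not_le.mp h), aN_eq_zero_of_lt (Nat.pos_of_ne_zero hk), Nat.cast_zero]

theorem Yv_mul_Qv_pow (d : ℕ) :
    Yv * Qv ^ d = MvPowerSeries.monomial (Finsupp.single 1 1 + Finsupp.single 2 d) 1 := by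
  rw [Yv, Qv, MvPowerSeries.X_pow_eq, MvPowerSeries.X_def, MvPowerSeries.monomial_mul_monomial,
    one_mul]

theorem Aser_three_mul_add_two {N : ℕ} (hN : 1 ≤ N) :
    Aser (3 * N + 2) = (∑ k ∈ Ico (3 * N) (3 * N + 3), Aser k) * (Yv * Qv ^ (3 * N + 2)) := by
  ext e
  rw [Yv_mul_Qv_pow, MvPowerSeries.coeff_mul_monomial, mul_one, map_sum, coeff_Aser (by omega)]
  split_ifs with hle
  · obtain ⟨d, rfl⟩ := le_iff_exists_add'.mp hle
    rw [add_tsub_cancel_right,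
      sum_congr rfl fun k hk => coeff_Aser (by rw [mem_Ico] at hk; omega) d]
    simp only [Finsupp.add_apply, Finsupp.single_eq_same, ne_eq, Fin.reduceEq, not_false_eq_true,
      Finsupp.single_eq_of_ne, add_zero, zero_add]
    exact_mod_cast aN_three_mul_add_two_succ N (d 0) (d 1) (d 2)
  · have : e 1 = 0 ∨ e 2 < 3 * N + 2 := by
      by_contra! h
      refine hle fun i => ?_
      fin_cases i <;> simp <;> omega
    rcases this with h | h
    · rw [h, aN_three_mul_add_two_zero, Nat.cast_zero]
    · rw [aN_eq_zero_of_lt h, Nat.cast_zero]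

theorem stmt15 (N : ℕ) (hN : 1 ≤ N) :
    Pser (3 * N + 2) * (1 - Yv * Qv ^ (3 * N + 2)) =
      Pser (3 * N + 1) - Pser (3 * N - 1) * (Yv * Qv ^ (3 * N + 2)) := by
  have hsucc : Pser (3 * N + 2) = Pser (3 * N + 1) + Aser (3 * N + 2) := sum_range_succ _ _
  have hdiff : Pser (3 * N + 2) - Pser (3 * N - 1) = ∑ k ∈ Ico (3 * N) (3 * N + 3), Aser k := by
    rw [Pser, Pser, sum_Ico_eq_sub _ (by omega), Nat.sub_add_cancel (by omega)]
  linear_combination hsucc + Aser_three_mul_add_two hN - Yv * Qv ^ (3 * N + 2) * hdiff
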